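/- Let O ⊆ ℝ^{n+1} be a nonempty open convex cone contained in the nonnegative orthant [0,∞)^{n+1}, let M > 0, and let F be a subadditive real-valued function on S := (O \ B(0,M)) ∩ ℕ^{n+1} satisfying F(β) ≥ C·|β| for all β ∈ S, for some constant C. Then for every p ∈ O with |p| = 1 there exists a real number L such that for every sequence α(k) ∈ S with |α(k)| → ∞ and α(k)/|α(k)| → p, one has F(α(k))/|α(k)| → L; in particular the limit exists and depends only on F and p. -/

import Mathlib

open Set Metric Filter

/-- The image of a vector of natural numbers in Euclidean space. -/
noncomputable def toR (n : ℕ) (α : Fin (n + 1) → ℕ) : EuclideanSpace ℝ (Fin (n + 1)) :=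
  WithLp.toLp 2 (fun i => (α i : ℝ))

/-- The sum of the coordinates of a vector, denoted `|·|` in the paper. -/
noncomputable def coordSum (n : ℕ) (x : EuclideanSpace ℝ (Fin (n + 1))) : ℝ :=
  ∑ i, x i

/-!
Write `rayDev p x = ‖x - |x| • p‖`. The condition `rayDev p x ≤ δ |x|`, i.e. `x / |x|` lies
within `δ` of `p`, is stable under sums, and for `δ < ε` (with `ball p ε ⊆ O`) and `|x|` large it
puts `x` in `O \ B(0,M)`.

First, `F β ≤ D |β|` for all large lattice points `β` of the cone `rayDev p β ≤ ε/2 |β|`: split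
`β` into its two coordinatewise halves, which satisfy the same condition up to an additive error
that does not accumulate, and recurse down to a bounded box, where `F` is bounded.

Second, if `γ, β` lie in the thinner cone `rayDev ≤ θε/4 |·|` and `|γ| ≤ θ |β|`, then
`β = m γ + ρ` with `θ |β| ≤ |ρ| ≤ 2θ |β|` and `ρ` in the first cone, so subadditivity gives
`F β / |β| ≤ F γ / |γ| + 2θ |D - C|`. Along any two admissible sequences this yields
`limsup ≤ liminf`, so they all converge to one limit.
-/

lemma EuclideanSpace.norm_le_sum_abs {ι : Type*} [Fintype ι] (x : EuclideanSpace ℝ ι) :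
    ‖x‖ ≤ ∑ i, |x i| := by
  rw [EuclideanSpace.norm_eq, Real.sqrt_le_iff]
  refine ⟨Finset.sum_nonneg fun i _ => abs_nonneg _, ?_⟩
  simpa only [Real.norm_eq_abs] using
    Finset.sum_sq_le_sq_sum_of_nonneg fun i _ => abs_nonneg (x i)

section CoordSum

variable {n : ℕ}

lemma coordSum_add (x y : EuclideanSpace ℝ (Fin (n + 1))) :
    coordSum n (x + y) = coordSum n x + coordSum n y :=
  Finset.sum_add_distrib

lemma coordSum_sub (x y : EuclideanSpace ℝ (Fin (n + 1))) :
    coordSum n (x - y) = coordSum n x - coordSum n y :=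
  Finset.sum_sub_distrib ..

lemma coordSum_smul (c : ℝ) (x : EuclideanSpace ℝ (Fin (n + 1))) :
    coordSum n (c • x) = c * coordSum n x :=
  (Finset.mul_sum ..).symm

lemma toR_add (α β : Fin (n + 1) → ℕ) : toR n (α + β) = toR n α + toR n β := by
  ext i; simp [toR]

lemma toR_nsmul (m : ℕ) (α : Fin (n + 1) → ℕ) : toR n (m • α) = (m : ℝ) • toR n α := by
  ext i; simp [toR]

lemma coordSum_le_mul_norm (x : EuclideanSpace ℝ (Fin (n + 1))) :
    coordSum n x ≤ (n + 1) * ‖x‖ := by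
  calc coordSum n x ≤ ∑ _i : Fin (n + 1), ‖x‖ :=
        Finset.sum_le_sum fun i _ => (le_abs_self _).trans (PiLp.norm_apply_le x i)
    _ = (n + 1) * ‖x‖ := by simp

lemma norm_le_coordSum_of_nonneg {x : EuclideanSpace ℝ (Fin (n + 1))} (hx : ∀ i, 0 ≤ x i) :
    ‖x‖ ≤ coordSum n x :=
  (EuclideanSpace.norm_le_sum_abs x).trans_eq <|
    Finset.sum_congr rfl fun i _ => abs_of_nonneg (hx i)

lemma abs_coordSum_le_of_abs_le {x : EuclideanSpace ℝ (Fin (n + 1))} {c : ℝ}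
    (hx : ∀ i, |x i| ≤ c) : |coordSum n x| ≤ (n + 1) * c :=
  calc |coordSum n x| ≤ ∑ i, |x i| := Finset.abs_sum_le_sum_abs _ _
    _ ≤ ∑ _i : Fin (n + 1), c := Finset.sum_le_sum fun i _ => hx i
    _ = (n + 1) * c := by simp

end CoordSum

section RayDev

variable {n : ℕ}

noncomputable def rayDev (p x : EuclideanSpace ℝ (Fin (n + 1))) : ℝ :=
  ‖x - coordSum n x • p‖

variable {p : EuclideanSpace ℝ (Fin (n + 1))}

lemma rayDev_nonneg (x : EuclideanSpace ℝ (Fin (n + 1))) : 0 ≤ rayDev p x :=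
  norm_nonneg _

lemma rayDev_add_le (x y : EuclideanSpace ℝ (Fin (n + 1))) :
    rayDev p (x + y) ≤ rayDev p x + rayDev p y := by
  unfold rayDev
  rw [coordSum_add, add_smul, add_sub_add_comm]
  exact norm_add_le _ _

lemma rayDev_sub_le (x y : EuclideanSpace ℝ (Fin (n + 1))) :
    rayDev p (x - y) ≤ rayDev p x + rayDev p y := by
  unfold rayDev
  rw [coordSum_sub, sub_smul, sub_sub_sub_comm]
  exact norm_sub_le _ _

lemma rayDev_smul {c : ℝ} (hc : 0 ≤ c) (x : EuclideanSpace ℝ (Fin (n + 1))) :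
    rayDev p (c • x) = c * rayDev p x := by
  unfold rayDev
  rw [coordSum_smul, mul_smul, ← smul_sub, norm_smul, Real.norm_of_nonneg hc]

lemma rayDev_eq_mul_norm {x : EuclideanSpace ℝ (Fin (n + 1))} (hx : 0 < coordSum n x) :
    rayDev p x = coordSum n x * ‖(coordSum n x)⁻¹ • x - p‖ := by
  rw [← norm_smul_of_nonneg hx.le, smul_sub, smul_inv_smul₀ hx.ne', rayDev]

lemma rayDev_le_of_abs_le (hp : ‖p‖ ≤ 1) {x : EuclideanSpace ℝ (Fin (n + 1))} {c : ℝ}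
    (hx : ∀ i, |x i| ≤ c) : rayDev p x ≤ 2 * (n + 1) * c := by
  have hc : 0 ≤ c := (abs_nonneg _).trans (hx 0)
  have hnorm : ‖x‖ ≤ (n + 1) * c :=
    (EuclideanSpace.norm_le_sum_abs x).trans <|
      (Finset.sum_le_sum fun i _ => hx i).trans_eq (by simp)
  have hsum := abs_coordSum_le_of_abs_le hx
  calc rayDev p x ≤ ‖x‖ + |coordSum n x| * ‖p‖ := by
        rw [rayDev, ← Real.norm_eq_abs, ← norm_smul]; exact norm_sub_le _ _
    _ ≤ (n + 1) * c + (n + 1) * c * 1 := by gcongr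
    _ = 2 * (n + 1) * c := by ring

end RayDev

lemma le_nsmul_add_of_subadditive {A : Type*} [AddMonoid A] {S : Set A} {F : A → ℝ}
    (hsub : ∀ a ∈ S, ∀ b ∈ S, F (a + b) ≤ F a + F b) {a b : A} (ha : a ∈ S) :
    ∀ m : ℕ, (∀ k < m, k • a + b ∈ S) → F (m • a + b) ≤ m * F a + F b
  | 0, _ => by simp
  | m + 1, hS => by
    have ih := le_nsmul_add_of_subadditive hsub ha m fun k hk => hS k (hk.trans m.lt_succ_self)
    rw [succ_nsmul', add_assoc]
    calc F (a + (m • a + b)) ≤ F a + F (m • a + b) := hsub _ ha _ (hS m m.lt_succ_self)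
      _ ≤ ((m + 1 : ℕ) : ℝ) * F a + F b := by push_cast; linarith

section Cone

variable {n : ℕ} {O : Set (EuclideanSpace ℝ (Fin (n + 1)))} {p : EuclideanSpace ℝ (Fin (n + 1))}
  {ε M : ℝ}

lemma mem_of_rayDev_lt (hcone : ∀ c : ℝ, 0 < c → ∀ x ∈ O, c • x ∈ O) (hball : ball p ε ⊆ O)
    (hε : 0 < ε) {x : EuclideanSpace ℝ (Fin (n + 1))} (hx : rayDev p x < ε * coordSum n x) :
    x ∈ O := by
  have hs : 0 < coordSum n x := pos_of_mul_pos_right ((rayDev_nonneg x).trans_lt hx) hε.le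
  have hdir : (coordSum n x)⁻¹ • x ∈ ball p ε := by
    rw [mem_ball, dist_eq_norm, ← mul_lt_mul_iff_right₀ hs, ← rayDev_eq_mul_norm hs, mul_comm]
    exact hx
  simpa [smul_inv_smul₀ hs.ne'] using hcone _ hs _ (hball hdir)

lemma not_mem_ball_of_mul_le_coordSum {x : EuclideanSpace ℝ (Fin (n + 1))}
    (hx : (n + 1) * M ≤ coordSum n x) : x ∉ ball 0 M := by
  rw [mem_ball_zero_iff, not_lt]
  exact le_of_mul_le_mul_left (hx.trans (coordSum_le_mul_norm x)) (by positivity)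

lemma mem_diff_ball_of_rayDev_lt (hcone : ∀ c : ℝ, 0 < c → ∀ x ∈ O, c • x ∈ O)
    (hball : ball p ε ⊆ O) (hε : 0 < ε) {x : EuclideanSpace ℝ (Fin (n + 1))}
    (hx : rayDev p x < ε * coordSum n x) (hxM : (n + 1) * M ≤ coordSum n x) :
    x ∈ O \ ball 0 M :=
  ⟨mem_of_rayDev_lt hcone hball hε hx, not_mem_ball_of_mul_le_coordSum hxM⟩

end Cone

section Halving

variable {n : ℕ} {p : EuclideanSpace ℝ (Fin (n + 1))}

lemma coordSum_toR (β : Fin (n + 1) → ℕ) : coordSum n (toR n β) = ((∑ i, β i : ℕ) : ℝ) := by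
  simp [coordSum, toR]

lemma coord_le_coordSum_toR (β : Fin (n + 1) → ℕ) (i : Fin (n + 1)) :
    (β i : ℝ) ≤ coordSum n (toR n β) :=
  Finset.single_le_sum (f := fun j => (β j : ℝ)) (fun _ _ => Nat.cast_nonneg _) (Finset.mem_univ i)

lemma exists_add_eq_near_half (β : Fin (n + 1) → ℕ) :
    ∃ y z : Fin (n + 1) → ℕ, β = y + z ∧
      (∀ i, |(toR n y - (2⁻¹ : ℝ) • toR n β) i| ≤ 2⁻¹) ∧
      (∀ i, |(toR n z - (2⁻¹ : ℝ) • toR n β) i| ≤ 2⁻¹) := by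
  refine ⟨fun i => β i / 2, fun i => β i - β i / 2, funext fun i => by simp; omega,
    fun i => ?_, fun i => ?_⟩ <;>
  · simp only [toR, PiLp.sub_apply, PiLp.smul_apply, smul_eq_mul]
    rcases Nat.even_or_odd' (β i) with ⟨k, hk | hk⟩ <;> rw [hk]
    · simp [show 2 * k / 2 = k by omega, show 2 * k - k = k by omega]
    · simp only [show (2 * k + 1) / 2 = k by omega, show 2 * k + 1 - k = k + 1 by omega]
      push_cast
      rw [abs_le]; constructor <;> linarith

variable {x y : EuclideanSpace ℝ (Fin (n + 1))}

lemma half_coordSum_sub_le_of_near_half (hxy : ∀ i, |(y - (2⁻¹ : ℝ) • x) i| ≤ 2⁻¹) :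
    2⁻¹ * coordSum n x - (n + 1) * 2⁻¹ ≤ coordSum n y := by
  have h := abs_coordSum_le_of_abs_le hxy
  rw [coordSum_sub, coordSum_smul] at h
  linarith [neg_abs_le (coordSum n y - 2⁻¹ * coordSum n x)]

lemma rayDev_le_of_near_half (hp : ‖p‖ ≤ 1) {δ : ℝ} (hδ : 0 ≤ δ)
    (hxy : ∀ i, |(y - (2⁻¹ : ℝ) • x) i| ≤ 2⁻¹)
    (hx : rayDev p x ≤ δ * coordSum n x + (n + 1) * (2 + δ)) :
    rayDev p y ≤ δ * coordSum n y + (n + 1) * (2 + δ) := by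
  have hdev : rayDev p y ≤ 2⁻¹ * rayDev p x + 2 * (n + 1) * 2⁻¹ := by
    calc rayDev p y = rayDev p ((2⁻¹ : ℝ) • x + (y - (2⁻¹ : ℝ) • x)) := by
          rw [add_sub_cancel]
      _ ≤ _ := (rayDev_add_le _ _).trans <| by
          rw [rayDev_smul (by norm_num)]
          exact add_le_add_right (rayDev_le_of_abs_le hp hxy) _
  have hsum := mul_le_mul_of_nonneg_left (half_coordSum_sub_le_of_near_half hxy) hδ
  nlinarith

end Halving

section UpperBound

variable {n : ℕ} {O : Set (EuclideanSpace ℝ (Fin (n + 1)))} {p : EuclideanSpace ℝ (Fin (n + 1))}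
  {ε M : ℝ} {F : (Fin (n + 1) → ℕ) → ℝ}

lemma le_mul_coordSum_of_halving (hcone : ∀ c : ℝ, 0 < c → ∀ x ∈ O, c • x ∈ O)
    (hball : ball p ε ⊆ O) (hε : 0 < ε) (hp : ‖p‖ ≤ 1)
    (hsub : ∀ α β : Fin (n + 1) → ℕ, toR n α ∈ O \ ball 0 M → toR n β ∈ O \ ball 0 M →
      F (α + β) ≤ F α + F β)
    {T D : ℝ} (hTK : (n + 1) * (2 + ε / 2) < ε / 2 * T) (hTM : (n + 1) * M ≤ T)
    (hbase : ∀ β, T ≤ coordSum n (toR n β) → coordSum n (toR n β) ≤ 2 * T + (n + 1) →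
      F β ≤ D * coordSum n (toR n β))
    (β : Fin (n + 1) → ℕ) (hβT : T ≤ coordSum n (toR n β))
    (hβ : rayDev p (toR n β) ≤ ε / 2 * coordSum n (toR n β) + (n + 1) * (2 + ε / 2)) :
    F β ≤ D * coordSum n (toR n β) := by
  induction hN : ∑ i, β i using Nat.strong_induction_on generalizing β with
  | _ N ih =>
  rcases le_or_gt (coordSum n (toR n β)) (2 * T + (n + 1)) with hsmall | hlarge
  · exact hbase β hβT hsmall
  have hT : 0 < T :=
    pos_of_mul_pos_right ((show (0 : ℝ) < (n + 1) * (2 + ε / 2) by positivity).trans hTK)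
      (half_pos hε).le
  obtain ⟨y, z, hβyz, hy, hz⟩ := exists_add_eq_near_half β
  have halfT : ∀ w : Fin (n + 1) → ℕ, (∀ i, |(toR n w - (2⁻¹ : ℝ) • toR n β) i| ≤ 2⁻¹) →
      T ≤ coordSum n (toR n w) := fun w hw => by
    linarith [half_coordSum_sub_le_of_near_half hw]
  have half : ∀ w : Fin (n + 1) → ℕ,
      (∀ i, |(toR n w - (2⁻¹ : ℝ) • toR n β) i| ≤ 2⁻¹) → ∑ i, w i < N →
      toR n w ∈ O \ ball 0 M ∧ F w ≤ D * coordSum n (toR n w) := by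
    intro w hw hwN
    have hwdev := rayDev_le_of_near_half hp (by positivity) hw hβ
    refine ⟨mem_diff_ball_of_rayDev_lt hcone hball hε ?_ (hTM.trans (halfT w hw)),
      ih _ hwN w (halfT w hw) hwdev rfl⟩
    nlinarith [halfT w hw]
  have hsum_pos : ∀ w : Fin (n + 1) → ℕ, (∀ i, |(toR n w - (2⁻¹ : ℝ) • toR n β) i| ≤ 2⁻¹) →
      0 < ∑ i, w i := fun w hw => by
    have := (hT.trans_le (halfT w hw)).trans_eq (coordSum_toR w)
    exact_mod_cast this
  have hNyz : N = ∑ i, y i + ∑ i, z i := by rw [← hN, hβyz, ← Finset.sum_add_distrib]; rfl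
  obtain ⟨hyS, hyF⟩ := half y hy (by linarith [hsum_pos z hz])
  obtain ⟨hzS, hzF⟩ := half z hz (by linarith [hsum_pos y hy])
  calc F β = F (y + z) := by rw [← hβyz]
    _ ≤ F y + F z := hsub y z hyS hzS
    _ ≤ D * coordSum n (toR n β) := by
        rw [hβyz, toR_add, coordSum_add]; linarith

lemma exists_le_mul_coordSum (hcone : ∀ c : ℝ, 0 < c → ∀ x ∈ O, c • x ∈ O)
    (hball : ball p ε ⊆ O) (hε : 0 < ε) (hp : ‖p‖ ≤ 1)
    (hsub : ∀ α β : Fin (n + 1) → ℕ, toR n α ∈ O \ ball 0 M → toR n β ∈ O \ ball 0 M →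
      F (α + β) ≤ F α + F β) :
    ∃ T D : ℝ, ∀ β, T ≤ coordSum n (toR n β) →
      rayDev p (toR n β) ≤ ε / 2 * coordSum n (toR n β) → F β ≤ D * coordSum n (toR n β) := by
  obtain ⟨T, hTK, hTM⟩ : ∃ T, (n + 1) * (2 + ε / 2) < ε / 2 * T ∧ (n + 1) * M ≤ T :=
    (((tendsto_id.const_mul_atTop (half_pos hε)).eventually_gt_atTop _).and
      (eventually_ge_atTop _)).exists
  have hT : 0 < T :=
    pos_of_mul_pos_right ((show (0 : ℝ) < (n + 1) * (2 + ε / 2) by positivity).trans hTK)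
      (half_pos hε).le
  obtain ⟨B, hB⟩ := ((Set.finite_Iic fun _ => ⌈2 * T + (n + 1)⌉₊).image F).bddAbove
  refine ⟨T, max B 0 / T, fun β hβT hβ => le_mul_coordSum_of_halving hcone hball hε hp hsub
    hTK hTM (fun β hβT hβR => ?_) β hβT (hβ.trans (le_add_of_nonneg_right (by positivity)))⟩
  have hβB : F β ≤ B := hB ⟨β, fun i => Nat.cast_le.1 <|
    ((coord_le_coordSum_toR β i).trans hβR).trans (Nat.le_ceil _), rfl⟩
  calc F β ≤ max B 0 / T * T := by rw [div_mul_cancel₀ _ hT.ne']; exact hβB.trans (le_max_left _ _)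
    _ ≤ max B 0 / T * coordSum n (toR n β) := by gcongr

end UpperBound

section Decomposition

variable {n : ℕ} {O : Set (EuclideanSpace ℝ (Fin (n + 1)))} {p : EuclideanSpace ℝ (Fin (n + 1))}
  {ε : ℝ}

lemma exists_eq_nsmul_add (hcone : ∀ c : ℝ, 0 < c → ∀ x ∈ O, c • x ∈ O)
    (hball : ball p ε ⊆ O) (hε : 0 < ε) (horth : O ⊆ {x | ∀ i, 0 ≤ x i})
    {θ : ℝ} (hθ : 0 < θ) (hθ1 : θ ≤ 1) {γ β : Fin (n + 1) → ℕ}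
    (hγ : rayDev p (toR n γ) ≤ θ * ε / 4 * coordSum n (toR n γ))
    (hβ : rayDev p (toR n β) ≤ θ * ε / 4 * coordSum n (toR n β))
    (hγpos : 0 < coordSum n (toR n γ)) (hγβ : coordSum n (toR n γ) ≤ θ * coordSum n (toR n β)) :
    ∃ (m : ℕ) (ρ : Fin (n + 1) → ℕ), β = m • γ + ρ ∧
      θ * coordSum n (toR n β) ≤ coordSum n (toR n ρ) ∧
      coordSum n (toR n ρ) ≤ 2 * θ * coordSum n (toR n β) ∧
      rayDev p (toR n ρ) ≤ ε / 2 * coordSum n (toR n ρ) := by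
  set g := coordSum n (toR n γ)
  set b := coordSum n (toR n β)
  have hb : 0 < b := by nlinarith
  set m := ⌊(1 - θ) * b / g⌋₊
  have hm1 : m * g ≤ (1 - θ) * b :=
    (le_div_iff₀ hγpos).1 (Nat.floor_le (div_nonneg (mul_nonneg (by linarith) hb.le) hγpos.le))
  have hm2 : (1 - θ) * b < (m + 1) * g := (div_lt_iff₀ hγpos).1 (Nat.lt_floor_add_one _)
  set r := toR n β - (m : ℝ) • toR n γ
  have hr : coordSum n r = b - m * g := by rw [coordSum_sub, coordSum_smul]
  have hrdev : rayDev p r ≤ ε / 2 * coordSum n r := by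
    calc rayDev p r ≤ rayDev p (toR n β) + m * rayDev p (toR n γ) := by
          rw [← rayDev_smul (Nat.cast_nonneg m)]; exact rayDev_sub_le _ _
      _ ≤ θ * ε / 4 * b + m * (θ * ε / 4 * g) := by gcongr
      _ = θ * ε / 4 * (b + m * g) := by ring
      _ ≤ θ * ε / 4 * (2 * b) := by gcongr; nlinarith
      _ = ε / 2 * (θ * b) := by ring
      _ ≤ ε / 2 * coordSum n r := by rw [hr]; gcongr; linarith
  have hrO : r ∈ O := mem_of_rayDev_lt hcone hball hε (hrdev.trans_lt (by rw [hr]; nlinarith))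
  have hle : ∀ i, m * γ i ≤ β i := fun i => by
    have := horth hrO i
    simp only [r, toR, PiLp.sub_apply, PiLp.smul_apply, smul_eq_mul, sub_nonneg] at this
    exact_mod_cast this
  refine ⟨m, β - m • γ, (add_tsub_cancel_of_le fun i => by simpa using hle i).symm, ?_⟩
  have htoR : toR n (β - m • γ) = r := by ext i; simp [r, toR, Nat.cast_sub (hle i)]
  rw [htoR, hr]
  exact ⟨by linarith, by nlinarith, hr ▸ hrdev⟩

end Decomposition

section AlmostMonotone

variable {n : ℕ} {O : Set (EuclideanSpace ℝ (Fin (n + 1)))} {p : EuclideanSpace ℝ (Fin (n + 1))}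
  {ε M : ℝ} {F : (Fin (n + 1) → ℕ) → ℝ}

lemma div_coordSum_le_add (hcone : ∀ c : ℝ, 0 < c → ∀ x ∈ O, c • x ∈ O)
    (hball : ball p ε ⊆ O) (hε : 0 < ε) (horth : O ⊆ {x | ∀ i, 0 ≤ x i})
    (hsub : ∀ α β : Fin (n + 1) → ℕ, toR n α ∈ O \ ball 0 M → toR n β ∈ O \ ball 0 M →
      F (α + β) ≤ F α + F β)
    {T D : ℝ} (hUB : ∀ ρ, T ≤ coordSum n (toR n ρ) →
      rayDev p (toR n ρ) ≤ ε / 2 * coordSum n (toR n ρ) → F ρ ≤ D * coordSum n (toR n ρ))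
    {C θ : ℝ} (hθ : 0 < θ) (hθ1 : θ ≤ 1) {γ β : Fin (n + 1) → ℕ}
    (hγS : toR n γ ∈ O \ ball 0 M) (hγC : C * coordSum n (toR n γ) ≤ F γ)
    (hγ : rayDev p (toR n γ) ≤ θ * ε / 4 * coordSum n (toR n γ))
    (hβ : rayDev p (toR n β) ≤ θ * ε / 4 * coordSum n (toR n β))
    (hγpos : 0 < coordSum n (toR n γ))
    (hβlarge : max (coordSum n (toR n γ)) (max T ((n + 1) * M)) ≤ θ * coordSum n (toR n β)) :
    F β / coordSum n (toR n β) ≤ F γ / coordSum n (toR n γ) + 2 * |D - C| * θ := by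
  obtain ⟨hγβ, hTβ, hMβ⟩ : coordSum n (toR n γ) ≤ θ * coordSum n (toR n β) ∧
      T ≤ θ * coordSum n (toR n β) ∧ (n + 1) * M ≤ θ * coordSum n (toR n β) := by
    simpa only [max_le_iff] using hβlarge
  obtain ⟨m, ρ, hβeq, hρ₁, hρ₂, hρ⟩ :=
    exists_eq_nsmul_add hcone hball hε horth hθ hθ1 hγ hβ hγpos hγβ
  have hbr : coordSum n (toR n β) = m * coordSum n (toR n γ) + coordSum n (toR n ρ) := by
    rw [hβeq, toR_add, toR_nsmul, coordSum_add, coordSum_smul]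
  set g := coordSum n (toR n γ)
  set b := coordSum n (toR n β)
  set r := coordSum n (toR n ρ)
  have hb : 0 < b := by nlinarith
  have hr : 0 < r := by nlinarith
  have hmem : ∀ k < m, k • γ + ρ ∈ {α | toR n α ∈ O \ ball 0 M} := fun k _ => by
    have hsum : coordSum n (toR n (k • γ + ρ)) = k * g + r := by
      rw [toR_add, toR_nsmul, coordSum_add, coordSum_smul]
    refine mem_diff_ball_of_rayDev_lt hcone hball hε ?_ (by rw [hsum]; nlinarith)
    calc rayDev p (toR n (k • γ + ρ)) ≤ k * rayDev p (toR n γ) + rayDev p (toR n ρ) := by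
          rw [toR_add, toR_nsmul, ← rayDev_smul (Nat.cast_nonneg k)]; exact rayDev_add_le _ _
      _ ≤ k * (θ * ε / 4 * g) + ε / 2 * r := by gcongr
      _ < ε * coordSum n (toR n (k • γ + ρ)) := by
          have hkg : 0 ≤ (k : ℝ) * g := by positivity
          rw [hsum]; nlinarith [mul_pos hε hr, mul_nonneg (mul_nonneg hε.le hkg) hθ.le]
  have hFβ : F β ≤ m * F γ + D * r := by
    rw [hβeq]
    exact (le_nsmul_add_of_subadditive (fun a ha b hb => hsub a b ha hb) hγS m hmem).trans
      (add_le_add le_rfl (hUB ρ (hTβ.trans hρ₁) hρ))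
  have hCu : C ≤ F γ / g := (le_div_iff₀ hγpos).2 hγC
  rw [div_le_iff₀ hb]
  calc F β ≤ m * F γ + D * r := hFβ
    _ = b * (F γ / g) + r * (D - F γ / g) := by rw [hbr]; field_simp; ring
    _ ≤ b * (F γ / g) + r * |D - C| := by
        gcongr
        exact (sub_le_sub_left hCu D).trans (le_abs_self _)
    _ ≤ b * (F γ / g) + (2 * θ * b) * |D - C| := by gcongr
    _ = (F γ / g + 2 * |D - C| * θ) * b := by ring

end AlmostMonotone

section Limits

open Topology

lemma limsup_le_liminf_of_forall_eventually_le {u v : ℕ → ℝ} {c : ℝ}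
    (hu : IsBoundedUnder (· ≥ ·) atTop u) (hv : IsBoundedUnder (· ≤ ·) atTop v)
    (h : ∀ θ ∈ Ioc (0 : ℝ) 1, ∀ᶠ k in atTop, ∀ᶠ j in atTop, u j ≤ v k + c * θ) :
    limsup u atTop ≤ liminf v atTop := by
  have hθ : ∀ θ ∈ Ioc (0 : ℝ) 1, limsup u atTop ≤ liminf v atTop + c * θ := fun θ hθ => by
    have : ∀ᶠ k in atTop, limsup u atTop - c * θ ≤ v k := (h θ hθ).mono fun k hk => by
      linarith [limsup_le_of_le hu.isCoboundedUnder_le hk]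
    linarith [le_liminf_of_le hv.isCoboundedUnder_ge this]
  have hlim : Tendsto (fun θ => liminf v atTop + c * θ) (𝓝[>] 0) (𝓝 (liminf v atTop)) :=
    tendsto_nhdsWithin_of_tendsto_nhds <| by
      simpa using tendsto_const_nhds.add ((tendsto_id (x := 𝓝 (0 : ℝ))).const_mul c)
  exact ge_of_tendsto hlim (mem_of_superset (Ioc_mem_nhdsGT one_pos) hθ)

lemma exists_forall_tendsto_of_forall_eventually_le {ι : Type*} (u : ι → ℕ → ℝ) (c : ℝ)
    (hbdd : ∀ a, IsBoundedUnder (· ≤ ·) atTop (u a) ∧ IsBoundedUnder (· ≥ ·) atTop (u a))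
    (h : ∀ a b, ∀ θ ∈ Ioc (0 : ℝ) 1, ∀ᶠ k in atTop, ∀ᶠ j in atTop, u a j ≤ u b k + c * θ) :
    ∃ L, ∀ a, Tendsto (u a) atTop (𝓝 L) := by
  rcases isEmpty_or_nonempty ι with hι | ⟨⟨a₀⟩⟩
  · exact ⟨0, isEmptyElim⟩
  have key : ∀ a b, limsup (u a) atTop ≤ liminf (u b) atTop := fun a b =>
    limsup_le_liminf_of_forall_eventually_le (hbdd a).2 (hbdd b).1 (h a b)
  refine ⟨limsup (u a₀) atTop, fun a =>
    tendsto_of_le_liminf_of_limsup_le (key a₀ a) ?_ (hbdd a).1 (hbdd a).2⟩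
  exact (key a a₀).trans (liminf_le_limsup (hbdd a₀).1 (hbdd a₀).2)

lemma eventually_rayDev_le {n : ℕ} {p : EuclideanSpace ℝ (Fin (n + 1))}
    {x : ℕ → EuclideanSpace ℝ (Fin (n + 1))} (ht : Tendsto (fun k => coordSum n (x k)) atTop atTop)
    (hd : Tendsto (fun k => (coordSum n (x k))⁻¹ • x k) atTop (𝓝 p)) {δ : ℝ} (hδ : 0 < δ) :
    ∀ᶠ k in atTop, rayDev p (x k) ≤ δ * coordSum n (x k) := by
  filter_upwards [ht.eventually_gt_atTop 0, Metric.tendsto_nhds.1 hd δ hδ] with k hk hkd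
  rw [rayDev_eq_mul_norm hk, mul_comm, ← dist_eq_norm]
  exact mul_le_mul_of_nonneg_right hkd.le hk.le

end Limits

theorem limit_exists_of_subadditive_general (n : ℕ) (O : Set (EuclideanSpace ℝ (Fin (n + 1))))
    (hO_open : IsOpen O)
    (hO_orth : O ⊆ {x | ∀ i, 0 ≤ x i})
    (hO_cone : ∀ c : ℝ, 0 < c → ∀ x ∈ O, c • x ∈ O)
    (M : ℝ)
    (F : (Fin (n + 1) → ℕ) → ℝ)
    (hsub : ∀ α β : Fin (n + 1) → ℕ, toR n α ∈ O \ ball 0 M → toR n β ∈ O \ ball 0 M →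
      F (α + β) ≤ F α + F β)
    (C : ℝ)
    (hlow : ∀ β : Fin (n + 1) → ℕ, toR n β ∈ O \ ball 0 M →
      C * coordSum n (toR n β) ≤ F β) :
    ∀ p ∈ O, coordSum n p = 1 →
      ∃ L : ℝ, ∀ α : ℕ → (Fin (n + 1) → ℕ),
        (∀ k, toR n (α k) ∈ O \ ball 0 M) →
        Tendsto (fun k => coordSum n (toR n (α k))) atTop atTop →
        Tendsto (fun k => (coordSum n (toR n (α k)))⁻¹ • toR n (α k)) atTop (nhds p) →
        Tendsto (fun k => F (α k) / coordSum n (toR n (α k))) atTop (nhds L) := by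
  intro p hp hp1
  obtain ⟨ε, hε, hball⟩ := Metric.isOpen_iff.1 hO_open p hp
  obtain ⟨T, D, hUB⟩ := exists_le_mul_coordSum hO_cone hball hε
    (hp1 ▸ norm_le_coordSum_of_nonneg (hO_orth hp)) hsub
  let A := {α : ℕ → Fin (n + 1) → ℕ // (∀ k, toR n (α k) ∈ O \ ball 0 M) ∧
    Tendsto (fun k => coordSum n (toR n (α k))) atTop atTop ∧
    Tendsto (fun k => (coordSum n (toR n (α k)))⁻¹ • toR n (α k)) atTop (nhds p)}
  have hdev (α : A) {δ : ℝ} (hδ : 0 < δ) :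
      ∀ᶠ k in atTop, rayDev p (toR n (α.1 k)) ≤ δ * coordSum n (toR n (α.1 k)) :=
    eventually_rayDev_le α.2.2.1 α.2.2.2 hδ
  let u (α : A) (k : ℕ) : ℝ := F (α.1 k) / coordSum n (toR n (α.1 k))
  have hbdd (α : A) : IsBoundedUnder (· ≤ ·) atTop (u α) ∧ IsBoundedUnder (· ≥ ·) atTop (u α) := by
    refine ⟨isBoundedUnder_of_eventually_le (a := D) ?_,
      isBoundedUnder_of_eventually_ge (a := C) ?_⟩
    · filter_upwards [hdev α (half_pos hε), α.2.2.1.eventually_ge_atTop T,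
        α.2.2.1.eventually_gt_atTop 0] with k hk hkT hk0
      exact (div_le_iff₀ hk0).2 (hUB _ hkT hk)
    · filter_upwards [α.2.2.1.eventually_gt_atTop 0] with k hk0
      exact (le_div_iff₀ hk0).2 (hlow _ (α.2.1 k))
  have hmono (α β : A) (θ : ℝ) (hθ : θ ∈ Ioc 0 1) :
      ∀ᶠ k in atTop, ∀ᶠ j in atTop, u α j ≤ u β k + 2 * |D - C| * θ := by
    have hθε : 0 < θ * ε / 4 := by linarith [mul_pos hθ.1 hε]
    filter_upwards [hdev β hθε, β.2.2.1.eventually_gt_atTop 0] with k hk hk0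
    filter_upwards [hdev α hθε, α.2.2.1.eventually_ge_atTop
      (max (coordSum n (toR n (β.1 k))) (max T ((n + 1) * M)) / θ)] with j hj hjk
    exact div_coordSum_le_add hO_cone hball hε hO_orth hsub hUB hθ.1 hθ.2 (β.2.1 k)
      (hlow _ (β.2.1 k)) hk hj hk0 ((div_le_iff₀' hθ.1).1 hjk)
  obtain ⟨L, hL⟩ := exists_forall_tendsto_of_forall_eventually_le u _ hbdd hmono
  exact ⟨L, fun α h1 h2 h3 => hL ⟨α, h1, h2, h3⟩⟩

/-- For a subadditive, linearly-bounded-below function `F` on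
`S = (O \ B(0,M)) ∩ ℕ^{n+1}`, the limits `F(α(k))/|α(k)|` along sequences in `S` with
`|α(k)| → ∞` and `α(k)/|α(k)| → p` exist and depend only on `F` and `p`. -/
theorem limit_exists_of_subadditive (n : ℕ) (O : Set (EuclideanSpace ℝ (Fin (n + 1))))
    (hO_open : IsOpen O) (hO_conv : Convex ℝ O) (hO_ne : O.Nonempty)
    (hO_orth : O ⊆ {x | ∀ i, 0 ≤ x i})
    (hO_cone : ∀ c : ℝ, 0 < c → ∀ x ∈ O, c • x ∈ O)
    (M : ℝ) (hM : 0 < M)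
    (F : (Fin (n + 1) → ℕ) → ℝ)
    (hsub : ∀ α β : Fin (n + 1) → ℕ, toR n α ∈ O \ ball 0 M → toR n β ∈ O \ ball 0 M →
      F (α + β) ≤ F α + F β)
    (C : ℝ)
    (hlow : ∀ β : Fin (n + 1) → ℕ, toR n β ∈ O \ ball 0 M →
      C * coordSum n (toR n β) ≤ F β) :
    ∀ p ∈ O, coordSum n p = 1 →
      ∃ L : ℝ, ∀ α : ℕ → (Fin (n + 1) → ℕ),
        (∀ k, toR n (α k) ∈ O \ ball 0 M) →
        Tendsto (fun k => coordSum n (toR n (α k))) atTop atTop →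
        Tendsto (fun k => (coordSum n (toR n (α k)))⁻¹ • toR n (α k)) atTop (nhds p) →
        Tendsto (fun k => F (α k) / coordSum n (toR n (α k))) atTop (nhds L) :=
  limit_exists_of_subadditive_general n O hO_open hO_orth hO_cone M F hsub C hlow
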